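/- Let G = (V, E, δ) be a geosocial graph in which every spatial vertex is a sink, and let u be a non-spatial vertex. Then RangeReach(G, u, R) is TRUE iff there exist a non-spatial vertex w reachable from u in the social subgraph and an edge (w, s) ∈ E with s spatial and δ(s) ∈ R, or u itself has a spatial out-neighbour s with δ(s) ∈ R (the case w = u). -/

import Mathlib

/-!
Since spatial vertices are sinks, every vertex of a path except possibly the last one has an
out-edge and is therefore non-spatial. So a path from `u` to a spatial vertex `s` is a path in the
social subgraph followed by one final edge `(w, s)`; the path is non-empty because `u` itself is
not spatial.
-/

variable {V : Type*}

def SCC (E : V → V → Prop) (u : V) : Set V :=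
  {v | Relation.ReflTransGen E u v ∧ Relation.ReflTransGen E v u}

def IsSCC (E : V → V → Prop) (C : Set V) : Prop := ∃ u, C = SCC E u

def CondEdge (E : V → V → Prop) (C C2 : Set V) : Prop :=
  IsSCC E C ∧ IsSCC E C2 ∧ C ≠ C2 ∧ ∃ a ∈ C, ∃ b ∈ C2, E a b

def RangeReach (E : V → V → Prop) (δ : V → Option (ℝ × ℝ)) (u : V) (R : Set (ℝ × ℝ)) : Prop :=
  ∃ v, Relation.ReflTransGen E u v ∧ ∃ p, δ v = some p ∧ p ∈ R

open Relation

def inducedRel (E : V → V → Prop) (p : V → Prop) : V → V → Prop :=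
  fun a b => p a ∧ p b ∧ E a b

lemma reflTransGen_inducedRel_of_forall_sink {E : V → V → Prop} {p : V → Prop}
    (hsink : ∀ v, ¬ p v → ∀ w, ¬ E v w) {u v w : V}
    (huv : ReflTransGen E u v) (hvw : E v w) :
    ReflTransGen (inducedRel E p) u v := by
  have mem_of_edge : ∀ {a b}, E a b → p a := fun {a b} hab => by_contra fun ha => hsink a ha b hab
  induction huv generalizing w with
  | refl => rfl
  | tail _ hbc ih => exact (ih hbc).tail ⟨mem_of_edge hbc, mem_of_edge hvw, hbc⟩

/-- Correctness of the compressed 2DReach query for a non-spatial vertex u, when all spatial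
vertices are sinks. -/
theorem stmt18 (E : V → V → Prop) (δ : V → Option (ℝ × ℝ))
    (hsink : ∀ v, δ v ≠ none → ∀ w, ¬ E v w)
    (u : V) (hu : δ u = none) (R : Set (ℝ × ℝ)) :
    RangeReach E δ u R ↔
      ((∃ w, δ w = none ∧
          Relation.ReflTransGen (fun a b => δ a = none ∧ δ b = none ∧ E a b) u w ∧
          ∃ s p, E w s ∧ δ s = some p ∧ p ∈ R) ∨
        (∃ s p, E u s ∧ δ s = some p ∧ p ∈ R)) := by
  constructor
  · rintro ⟨s, hus, p, hs, hp⟩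
    rcases hus.cases_tail with rfl | ⟨w, huw, hws⟩
    · simp [hu] at hs
    · have hw : δ w = none := by_contra fun hw => hsink w hw s hws
      exact Or.inl ⟨w, hw, reflTransGen_inducedRel_of_forall_sink hsink huw hws, s, p, hws, hs, hp⟩
  · rintro (⟨w, -, huw, s, p, hws, hs, hp⟩ | ⟨s, p, hus, hs, hp⟩)
    · exact ⟨s, (ReflTransGen.mono (fun _ _ h => h.2.2) _ _ huw).tail hws, p, hs, hp⟩
    · exact ⟨s, .single hus, p, hs, hp⟩
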